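/- Let k be a field and let 0 → W → P → V → 0 be a short exact sequence of N-modules in which P is a direct sum of finitely many representable modules P(x_1), …, P(x_ω) and the induced map H_0(P) → H_0(V) is an isomorphism. If W is generated in degrees ≤ m with respect to the sum norm, then W admits a presentation Q¹ → Q⁰ → W → 0 in which Q⁰ is a direct sum of modules P(y) with sum norm of y at most m and Q¹ is a direct sum of modules P(y) with sum norm of y at most 2^ω·m. (That is, hd_2(V) ≤ 2^ω·hd_1(V) with respect to the sum norm, where ω = dim_k H_0(V).) -/

import Mathlib

open CategoryTheory CategoryTheory.Limits

/-- The poset `ℕ →₀ ℕ` of finitely supported sequences of naturals, with pointwise order,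
regarded as a thin category. -/
abbrev NPoset := ℕ →₀ ℕ

/-- The sum norm of `x : ℕ →₀ ℕ` is `∑ i, x i`. -/
def sumNorm (x : NPoset) : ℕ := x.sum fun _ v => v

/-- `P x` is the `k`-linearization of the representable functor `N(x, -)`. -/
noncomputable def Pmod (k : Type) [Field k] (x : NPoset) : NPoset ⥤ ModuleCat k :=
  coyoneda.obj (Opposite.op x) ⋙ ModuleCat.free k

/-- `Q` is a (possibly infinite) direct sum of modules `P y` with `y ∈ S`. -/
def IsDirectSumOfP (k : Type) [Field k] (Q : NPoset ⥤ ModuleCat k) (S : Set NPoset) : Prop :=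
  ∃ (ι : Type) (g : ι → NPoset) (_ : ∀ j, g j ∈ S)
    (incl : ∀ j, Pmod k (g j) ⟶ Q), Nonempty (IsColimit (Cofan.mk Q incl))

/-- `V` is generated in degrees `≤ n` with respect to a norm. -/
def GeneratedInDeg {k : Type} [Field k] (norm : NPoset → ℕ)
    (V : NPoset ⥤ ModuleCat k) (n : ℕ) : Prop :=
  ∀ z : NPoset,
    (⨆ (y : NPoset) (h : y ≤ z) (_ : norm y ≤ n),
      LinearMap.range (V.map (homOfLE h)).hom) = ⊤

/-- The submodule of `V_z` spanned by the images of all transition maps from objects `y < z`;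
the zeroth homology `H₀(V)_z` is the quotient of `V_z` by this submodule. -/
noncomputable def radSubmodule {k : Type} [Field k] (V : NPoset ⥤ ModuleCat k) (z : NPoset) :
    Submodule k (V.obj z) :=
  ⨆ (y : NPoset) (h : y < z), LinearMap.range (V.map (homOfLE h.le)).hom

/-!
Because `W` embeds in the free module `P` on `ω` generators, every `W_z` has dimension at most
`ω` and all transition maps of `W` are injective. Cover `W` by the free module `Q⁰` on all
elements of `W` in degrees of norm `≤ m`. A relation at `z` among more than `ω + 1` generators
of `Q⁰` can be shortened by a multiple of a relation among `ω + 1` of them (which are dependent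
in `W_z`), so the relations at `z` are spanned by relations supported on at most `ω + 1`
generators. Such a relation comes from the join of the degrees of its generators, where by
injectivity it is again a relation; that join has norm at most `(ω + 1) m ≤ 2 ^ ω m`.
-/

section

variable {k : Type} [Field k]

-- A concrete model of `∐ j, N(g j, -)`, so that `freeOn k g` models `⨁ j, P (g j)`.
def genSet {ι : Type} (g : ι → NPoset) : NPoset ⥤ Type where
  obj z := {j : ι // g j ≤ z}
  map f := TypeCat.ofHom fun j => ⟨j.1, j.2.trans (leOfHom f)⟩

noncomputable abbrev freeOn (k : Type) [Field k] {ι : Type} (g : ι → NPoset) :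
    NPoset ⥤ ModuleCat k :=
  genSet g ⋙ ModuleCat.free k

section
variable {ι : Type} (g : ι → NPoset)

def genSet.incl (j : ι) : coyoneda.obj (Opposite.op (g j)) ⟶ genSet g where
  app z := TypeCat.ofHom fun h => ⟨j, leOfHom h⟩

def genSet.isColimit : IsColimit (Cofan.mk (genSet g) (genSet.incl g)) :=
  evaluationJointlyReflectsColimits _ fun z =>
    (isColimitMapCoconeCofanMkEquiv _ _ _).symm <|
      Cofan.IsColimit.mk _ (fun s => TypeCat.ofHom fun j => s.inj j.1 (homOfLE j.2))
        (fun s j => rfl) (fun s σ hσ => by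
          ext ⟨j, hj⟩
          exact ConcreteCategory.congr_hom (hσ j) (homOfLE hj : g j ⟶ z))

noncomputable def freeOn.incl (j : ι) : Pmod k (g j) ⟶ freeOn k g :=
  Functor.whiskerRight (genSet.incl g j) (ModuleCat.free k)

noncomputable def freeOn.isColimit : IsColimit (Cofan.mk (freeOn k g) (freeOn.incl (k := k) g)) :=
  have := ((ModuleCat.adj k).whiskerRight NPoset).leftAdjoint_preservesColimits
  isColimitCofanMkObjOfIsColimit ((Functor.whiskeringRight _ _ _).obj (ModuleCat.free k)) _ _
    (genSet.isColimit g)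

lemma isDirectSumOfP_freeOn {S : Set NPoset} (hg : ∀ j, g j ∈ S) :
    IsDirectSumOfP k (freeOn k g) S :=
  ⟨ι, g, hg, freeOn.incl g, ⟨freeOn.isColimit g⟩⟩

end

section
variable {ι : Type} {g : ι → NPoset}

noncomputable def freeOn.desc (T : NPoset ⥤ ModuleCat k) (t : ∀ j, T.obj (g j)) :
    freeOn k g ⟶ T where
  app z := ModuleCat.freeDesc (TypeCat.ofHom fun j => T.map (homOfLE j.2) (t j.1))
  naturality y z f := by
    refine ModuleCat.free_hom_ext fun j => ?_
    simp only [Functor.comp_map, ConcreteCategory.comp_apply]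
    erw [ModuleCat.free_map_apply, ModuleCat.freeDesc_apply, ModuleCat.freeDesc_apply]
    change T.map _ (t j.1) = T.map f (T.map (homOfLE j.2) (t j.1))
    rw [← ConcreteCategory.comp_apply, ← T.map_comp]
    rfl

lemma freeOn.desc_app_freeMk (T : NPoset ⥤ ModuleCat k) (t : ∀ j, T.obj (g j)) {z : NPoset}
    (j : (genSet g).obj z) :
    (freeOn.desc T t).app z (ModuleCat.freeMk j) = T.map (homOfLE j.2) (t j.1) :=
  ModuleCat.freeDesc_apply _ _

lemma freeOn.map_injective {y z : NPoset} (f : y ⟶ z) :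
    Function.Injective ((freeOn k g).map f) :=
  Finsupp.mapDomain_injective fun _ _ hab => Subtype.ext (congrArg Subtype.val hab :)

end

noncomputable def cover (norm : NPoset → ℕ) (T : NPoset ⥤ ModuleCat k) (n : ℕ) :
    freeOn k (fun j : Σ y : {y : NPoset // norm y ≤ n}, T.obj y => j.1.1) ⟶ T :=
  freeOn.desc T fun j => j.2

lemma cover_app_surjective {norm : NPoset → ℕ} {T : NPoset ⥤ ModuleCat k} {n : ℕ}
    (hT : GeneratedInDeg norm T n) (z : NPoset) : Function.Surjective ((cover norm T n).app z) := by
  refine LinearMap.range_eq_top.1 (eq_top_iff.2 ?_)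
  rw [← hT z]
  refine iSup_le fun y => iSup_le fun hyz => iSup_le fun hy => ?_
  rintro _ ⟨w, rfl⟩
  exact ⟨ModuleCat.freeMk ⟨⟨⟨y, hy⟩, w⟩, hyz⟩, freeOn.desc_app_freeMk _ _ _⟩

lemma GeneratedInDeg.mono {norm : NPoset → ℕ} {T : NPoset ⥤ ModuleCat k} {n n' : ℕ}
    (hT : GeneratedInDeg norm T n) (hn : n ≤ n') : GeneratedInDeg norm T n' := fun z =>
  eq_top_iff.2 <| (hT z).ge.trans <| iSup₂_mono fun _ _ =>
    iSup_le fun hy => le_iSup_of_le (hy.trans hn) le_rfl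

section
variable {C : Type*} [Category C] {F G : C ⥤ ModuleCat k} (p : F ⟶ G)

noncomputable def kerFunctor : C ⥤ ModuleCat k where
  obj z := ModuleCat.of k (LinearMap.ker (p.app z).hom)
  map {y z} f := ModuleCat.ofHom <| (F.map f).hom.restrict fun u (hu : p.app y u = 0) =>
    show p.app z (F.map f u) = 0 by
      rw [← ConcreteCategory.comp_apply, p.naturality, ConcreteCategory.comp_apply, hu, map_zero]
  map_id z := by ext u; exact congrArg (· u) (F.map_id z)
  map_comp f f' := by ext u; exact congrArg (· u) (F.map_comp f f')

noncomputable def kerFunctor.ι : kerFunctor p ⟶ F where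
  app z := ModuleCat.ofHom (LinearMap.ker (p.app z).hom).subtype

lemma kerFunctor.exact_comp_ι {Q : C ⥤ ModuleCat k} (q : Q ⟶ kerFunctor p)
    (hq : ∀ z, Function.Surjective (q.app z)) (z : C) :
    Function.Exact ((q ≫ kerFunctor.ι p).app z) (p.app z) := fun u =>
  ⟨fun hu => (hq z ⟨u, hu⟩).imp fun _ hv => congrArg Subtype.val hv,
    by rintro ⟨v, rfl⟩; exact (q.app z v).2⟩

end

lemma Finsupp.exists_ne_zero_mem_ker_supported_of_rank_lt_card {ι M : Type*} [AddCommGroup M]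
    [Module k M]
    (f : (ι →₀ k) →ₗ[k] M) {n : ℕ} (hM : Module.rank k M ≤ n) {t : Finset ι}
    (ht : n < t.card) : ∃ l ∈ Finsupp.supported k k (t : Set ι), f l = 0 ∧ l ≠ 0 := by
  have hf : Finsupp.linearCombination k (fun j => f (Finsupp.single j 1)) = f :=
    Finsupp.lhom_ext fun j a => by simp [← map_smul]
  have hdep : ¬ LinearIndepOn k (fun j => f (Finsupp.single j 1)) (t : Set ι) := fun hli => by
    have := hli.linearIndependent.cardinal_lift_le_rank.trans (Cardinal.lift_le.2 hM)
    simp only [Finset.coe_sort_coe, Cardinal.mk_coe_finset, Cardinal.lift_natCast,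
      Nat.cast_le] at this
    omega
  simp only [linearIndepOn_iff, hf, not_forall] at hdep
  obtain ⟨l, hl, hfl, hl0⟩ := hdep
  exact ⟨l, hl, hfl, hl0⟩

lemma Finsupp.ker_le_span_ker_card_support_le {ι M : Type*} [AddCommGroup M] [Module k M]
    (f : (ι →₀ k) →ₗ[k] M) {n : ℕ} (hM : Module.rank k M ≤ n) :
    LinearMap.ker f ≤
      Submodule.span k {l | l ∈ LinearMap.ker f ∧ l.support.card ≤ n + 1} := by
  classical
  suffices h : ∀ s : ℕ, ∀ c ∈ LinearMap.ker f, c.support.card ≤ s →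
      c ∈ Submodule.span k {l | l ∈ LinearMap.ker f ∧ l.support.card ≤ n + 1} from
    fun c hc => h _ c hc le_rfl
  intro s
  induction s with
  | zero =>
    intro c _ hc
    rw [Nat.le_zero, Finset.card_eq_zero, Finsupp.support_eq_empty] at hc
    exact hc ▸ zero_mem _
  | succ s ih =>
    intro c hc hcs
    by_cases hsmall : c.support.card ≤ n + 1
    · exact Submodule.subset_span ⟨hc, hsmall⟩
    obtain ⟨t, hts, htcard⟩ := Finset.exists_subset_card_eq (not_le.1 hsmall).le
    obtain ⟨l, hlt, hfl, hl0⟩ :=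
      exists_ne_zero_mem_ker_supported_of_rank_lt_card f hM (t := t) (by omega)
    obtain ⟨j, hj⟩ := Finsupp.support_nonempty_iff.2 hl0
    have hlsupp : l.support ⊆ t := fun i hi => hlt hi
    set c' := c - (c j / l j) • l with hc'
    have hc'ker : c' ∈ LinearMap.ker f := sub_mem hc (Submodule.smul_mem _ _ hfl)
    have hc'supp : c'.support ⊆ c.support.erase j := by
      intro i hi
      refine Finset.mem_erase.2 ⟨?_, ?_⟩
      · rintro rfl
        exact Finsupp.mem_support_iff.1 hi (by
          simp [hc', div_mul_cancel₀ _ (Finsupp.mem_support_iff.1 hj)])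
      · exact (Finset.union_subset le_rfl ((Finsupp.support_smul).trans (hlsupp.trans hts)))
          (Finsupp.support_sub hi)
    have hcard : c'.support.card ≤ s := by
      have := Finset.card_le_card hc'supp
      rw [Finset.card_erase_of_mem (hts (hlsupp hj))] at this
      omega
    have hl : l ∈ Submodule.span k {l | l ∈ LinearMap.ker f ∧ l.support.card ≤ n + 1} :=
      Submodule.subset_span ⟨hfl, (Finset.card_le_card hlsupp).trans htcard.le⟩
    rw [show c = c' + (c j / l j) • l by rw [hc', sub_add_cancel]]
    exact add_mem (ih c' hc'ker hcard) (Submodule.smul_mem _ _ hl)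

lemma sumNorm_sup_le (a b : NPoset) : sumNorm (a ⊔ b) ≤ sumNorm a + sumNorm b :=
  (Finsupp.degree_mono (sup_le le_self_add le_add_self)).trans_eq (map_add Finsupp.degree a b)

lemma sumNorm_finset_sup_le {ι : Type} (s : Finset ι) (g : ι → NPoset) :
    sumNorm (s.sup g) ≤ ∑ j ∈ s, sumNorm (g j) :=
  Finset.apply_sup_le_sum (map_zero (Finsupp.degree : NPoset →+ ℕ)) (sumNorm_sup_le _ _) s

lemma freeOn.exists_map_eq {ι : Type} {g : ι → NPoset} {y z : NPoset} (h : y ≤ z)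
    (l : (freeOn k g).obj z) (hl : ∀ j ∈ l.support, g j.1 ≤ y) :
    ∃ l' : (freeOn k g).obj y, (freeOn k g).map (homOfLE h) l' = l := by
  let e := (genSet g).map (homOfLE h)
  have he : Function.Injective e := fun a b hab => Subtype.ext (congrArg Subtype.val hab :)
  exact ⟨Finsupp.comapDomain e l he.injOn,
    Finsupp.mapDomain_comapDomain e he l fun j hj => ⟨⟨j.1, hl j hj⟩, rfl⟩⟩

theorem generatedInDeg_kerFunctor {ι : Type} {g : ι → NPoset} {T : NPoset ⥤ ModuleCat k}
    (p : freeOn k g ⟶ T) {m ω : ℕ} (hg : ∀ j, sumNorm (g j) ≤ m)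
    (hinj : ∀ {y z : NPoset} (f : y ⟶ z), Function.Injective (T.map f))
    (hrank : ∀ z, Module.rank k (T.obj z) ≤ ω) :
    GeneratedInDeg sumNorm (kerFunctor p) ((ω + 1) * m) := by
  intro z
  refine eq_top_iff.2 fun c _ => ?_
  suffices h : LinearMap.ker (p.app z).hom ≤ Submodule.map (kerFunctor.ι p |>.app z).hom
      (⨆ (y : NPoset) (h : y ≤ z) (_ : sumNorm y ≤ (ω + 1) * m),
        LinearMap.range ((kerFunctor p).map (homOfLE h)).hom) by
    obtain ⟨c', hc', hc'c⟩ := h c.2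
    exact (Subtype.ext hc'c : c' = c) ▸ hc'
  refine (Finsupp.ker_le_span_ker_card_support_le _ (hrank z)).trans (Submodule.span_le.2 ?_)
  rintro l ⟨hl, hcard⟩
  set y := l.support.sup fun j => g j.1
  have hyz : y ≤ z := Finset.sup_le fun j _ => j.2
  obtain ⟨l', hl'⟩ := freeOn.exists_map_eq hyz l fun j hj => Finset.le_sup (f := (g ·.1)) hj
  have hy : sumNorm y ≤ (ω + 1) * m := calc
    sumNorm y ≤ ∑ j ∈ l.support, sumNorm (g j.1) := sumNorm_finset_sup_le _ _
    _ ≤ l.support.card * m := Finset.sum_le_card_nsmul _ _ _ fun j _ => hg j.1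
    _ ≤ (ω + 1) * m := Nat.mul_le_mul_right m hcard
  have hker : p.app y l' = 0 := hinj (homOfLE hyz) <| by
    rw [map_zero, ← ConcreteCategory.comp_apply, ← p.naturality, ConcreteCategory.comp_apply,
      hl']
    exact hl
  exact ⟨(kerFunctor p).map (homOfLE hyz) ⟨l', hker⟩, Submodule.mem_iSup_of_mem y <|
    Submodule.mem_iSup_of_mem hyz <| Submodule.mem_iSup_of_mem hy ⟨⟨l', hker⟩, rfl⟩, hl'⟩

lemma map_injective_of_app_injective {C : Type*} [Category C] {F G : C ⥤ ModuleCat k}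
    (ρ : F ⟶ G) (hρ : ∀ z, Function.Injective (ρ.app z)) {y z : C} (f : y ⟶ z)
    (hG : Function.Injective (G.map f)) : Function.Injective (F.map f) := by
  have hcomm : ρ.app z ∘ F.map f = G.map f ∘ ρ.app y :=
    funext (ConcreteCategory.congr_hom (ρ.naturality f))
  exact (hcomm ▸ hG.comp (hρ y) : Function.Injective (ρ.app z ∘ F.map f)).of_comp

section
variable {ι : Type} {g : ι → NPoset} {P : NPoset ⥤ ModuleCat k}
  {incl : ∀ j, Pmod k (g j) ⟶ P}

lemma map_injective_of_isColimit_cofan (hP : IsColimit (Cofan.mk P incl)) {y z : NPoset}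
    (f : y ⟶ z) : Function.Injective (P.map f) :=
  let e : P ≅ freeOn k g := hP.coconePointUniqueUpToIso (freeOn.isColimit g)
  map_injective_of_app_injective e.hom (fun z => (e.app z).toLinearEquiv.injective) f
    (freeOn.map_injective f)

lemma rank_obj_le_of_isColimit_cofan (hP : IsColimit (Cofan.mk P incl)) (z : NPoset) :
    Module.rank k (P.obj z) ≤ Cardinal.mk ι := by
  let e : P ≅ freeOn k g := hP.coconePointUniqueUpToIso (freeOn.isColimit g)
  rw [(e.app z).toLinearEquiv.rank_eq]
  exact (rank_finsupp_self' (R := k)).trans_le (Cardinal.mk_subtype_le _)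

end

end

theorem stmt8_general {k : Type} [Field k] (W P : NPoset ⥤ ModuleCat k)
    (ρ : W ⟶ P)
    (hρ : ∀ z : NPoset, Function.Injective (ρ.app z))
    (ω : ℕ) (x : Fin ω → NPoset)
    (incl : ∀ j : Fin ω, Pmod k (x j) ⟶ P)
    (hP : Nonempty (IsColimit (Cofan.mk P incl)))
    (m : ℕ) (hW : GeneratedInDeg sumNorm W m) :
    ∃ (Q1 Q0 : NPoset ⥤ ModuleCat k) (d : Q1 ⟶ Q0) (p : Q0 ⟶ W),
      IsDirectSumOfP k Q1 {y | sumNorm y ≤ 2 ^ ω * m} ∧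
      IsDirectSumOfP k Q0 {y | sumNorm y ≤ m} ∧
      (∀ z : NPoset, Function.Surjective (p.app z)) ∧
      (∀ z : NPoset, Function.Exact (d.app z) (p.app z)) := by
  obtain ⟨hP⟩ := hP
  have hWinj {y z : NPoset} (f : y ⟶ z) : Function.Injective (W.map f) :=
    map_injective_of_app_injective ρ hρ f (map_injective_of_isColimit_cofan hP f)
  have hWrank (z : NPoset) : Module.rank k (W.obj z) ≤ ω :=
    (LinearMap.rank_le_of_injective _ (hρ z)).trans
      ((rank_obj_le_of_isColimit_cofan hP z).trans_eq (Cardinal.mk_fin ω))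
  let p := cover sumNorm W m
  have hK : GeneratedInDeg sumNorm (kerFunctor p) (2 ^ ω * m) :=
    (generatedInDeg_kerFunctor p (fun j => j.1.2) hWinj hWrank).mono
      (Nat.mul_le_mul_right m Nat.lt_two_pow_self)
  exact ⟨_, _, cover sumNorm (kerFunctor p) (2 ^ ω * m) ≫ kerFunctor.ι p, p,
    isDirectSumOfP_freeOn _ fun j => j.1.2, isDirectSumOfP_freeOn _ fun j => j.1.2,
    cover_app_surjective hW, kerFunctor.exact_comp_ι p _ (cover_app_surjective hK)⟩

/-- Let `0 → W → P → V → 0` be a short exact sequence of `N`-modules over a field `k`, where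
`P` is a direct sum of `ω` representables `P (x 1), …, P (x ω)` and the induced map
`H₀(P) → H₀(V)` is an isomorphism.  If `W` is generated in sum-norm degrees `≤ m`, then `W`
admits a presentation `Q¹ → Q⁰ → W → 0` with `Q⁰` a direct sum of modules `P y`, `sumNorm y ≤ m`,
and `Q¹` a direct sum of modules `P y`, `sumNorm y ≤ 2 ^ ω * m`.
(That is, `hd₂ V ≤ 2 ^ ω · hd₁ V` where `ω = dim_k H₀(V)`.) -/
theorem stmt8 {k : Type} [Field k] (W P V : NPoset ⥤ ModuleCat k)
    (ρ : W ⟶ P) (π : P ⟶ V)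
    (hρ : ∀ z : NPoset, Function.Injective (ρ.app z))
    (hπ : ∀ z : NPoset, Function.Surjective (π.app z))
    (hexact : ∀ z : NPoset, Function.Exact (ρ.app z) (π.app z))
    (ω : ℕ) (x : Fin ω → NPoset)
    (incl : ∀ j : Fin ω, Pmod k (x j) ⟶ P)
    (hP : Nonempty (IsColimit (Cofan.mk P incl)))
    (hH0 : ∀ (z : NPoset) (p : P.obj z),
      π.app z p ∈ radSubmodule V z ↔ p ∈ radSubmodule P z)
    (m : ℕ) (hW : GeneratedInDeg sumNorm W m) :
    ∃ (Q1 Q0 : NPoset ⥤ ModuleCat k) (d : Q1 ⟶ Q0) (p : Q0 ⟶ W),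
      IsDirectSumOfP k Q1 {y | sumNorm y ≤ 2 ^ ω * m} ∧
      IsDirectSumOfP k Q0 {y | sumNorm y ≤ m} ∧
      (∀ z : NPoset, Function.Surjective (p.app z)) ∧
      (∀ z : NPoset, Function.Exact (d.app z) (p.app z)) :=
  stmt8_general W P ρ hρ ω x incl hP m hW
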